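/- arXiv:0704.1340 — 7 statements merged into one kernel-verified Lean document; each statement's English description precedes it below -/
import Mathlib

section
/- For all integers r ≥ 1 and s ≥ 1, with g = (r+1)(s+1), the product (s+1)!·(s+2)!···(s+r+1)! divides (1!·2!···r!)·g!; consequently the Castelnuovo number N = (1!·2!···r!·g!) / ((s+1)!·(s+2)!···(s+r+1)!) is a positive integer. -/
/-!
Write `aᵢ = s + 1 + i` for `0 ≤ i ≤ r`. The matrix `(aᵢ.descFactorial j)` is the matrix
of the monic polynomials `X(X-1)⋯(X-j+1)` evaluated at the `aᵢ`, so its determinant is the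
Vandermonde determinant `∏_{i<j} (aⱼ - aᵢ) = 1!·2!⋯r!`. Each term of its Leibniz
expansion, `∏ⱼ a_{σ j}! / (a_{σ j} - j)!`, becomes divisible by `∏ᵢ aᵢ!` after
multiplication by `g!`, because `∑ⱼ (a_{σ j} - j) = g` and a product of factorials divides
the factorial of the sum.
-/

open Finset Nat Matrix

theorem Nat.prod_factorial_dvd_factorial_mul_prod_descFactorial {ι : Type*} (s : Finset ι)
    (b c : ι → ℕ) (m : ℕ) (h : ∑ i ∈ s, b i ≤ m + ∑ i ∈ s, c i) :
    ∏ i ∈ s, (b i)! ∣ m ! * ∏ i ∈ s, (b i).descFactorial (c i) := by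
  by_cases hcb : ∀ i ∈ s, c i ≤ b i
  · have hsum : ∑ i ∈ s, (b i - c i) ≤ m := by
      have := Finset.sum_tsub_distrib s hcb
      omega
    have hfac : ∏ i ∈ s, (b i)! =
        (∏ i ∈ s, (b i - c i)!) * ∏ i ∈ s, (b i).descFactorial (c i) := by
      rw [← Finset.prod_mul_distrib]
      exact Finset.prod_congr rfl fun i hi => (Nat.factorial_mul_descFactorial (hcb i hi)).symm
    rw [hfac]
    exact Nat.mul_dvd_mul_right
      ((Nat.prod_factorial_dvd_factorial_sum s _).trans (Nat.factorial_dvd_factorial hsum)) _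
  · push Not at hcb
    obtain ⟨i, hi, hbc⟩ := hcb
    have hzero : ∏ i ∈ s, (b i).descFactorial (c i) = 0 :=
      Finset.prod_eq_zero hi (Nat.descFactorial_eq_zero_iff_lt.mpr hbc)
    rw [hzero, mul_zero]
    exact dvd_zero _

theorem Matrix.det_descFactorial_eq_det_vandermonde {n : ℕ} (a : Fin n → ℕ) :
    (Matrix.of fun i j : Fin n => ((a i).descFactorial j : ℤ)).det =
      (vandermonde fun i => (a i : ℤ)).det := by
  rw [det_eval_matrixOfPolynomials_eq_det_vandermonde _ (fun j => descPochhammer ℤ j)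
    (fun j => descPochhammer_natDegree ℤ j) (fun j => monic_descPochhammer ℤ j)]
  simp only [descPochhammer_eval_eq_descFactorial]

theorem Matrix.prod_factorial_dvd_factorial_mul_det_descFactorial {n : ℕ} (a : Fin n → ℕ)
    (m : ℕ) (h : ∑ i, a i ≤ m + ∑ i : Fin n, (i : ℕ)) :
    (∏ i, (a i)! : ℤ) ∣
      m ! * (Matrix.of fun i j : Fin n => ((a i).descFactorial j : ℤ)).det := by
  rw [det_apply, Finset.mul_sum]
  refine Finset.dvd_sum fun σ _ => ?_
  have hterm : ∏ i, (a (σ i))! ∣ m ! * ∏ i, (a (σ i)).descFactorial i :=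
    Nat.prod_factorial_dvd_factorial_mul_prod_descFactorial _ _ _ m
      (by rwa [Equiv.sum_comp σ a])
  rw [Equiv.prod_comp σ (fun i => (a i)!)] at hterm
  simp only [of_apply, Units.smul_def, smul_eq_mul]
  rw [mul_left_comm]
  exact Dvd.dvd.mul_left (by exact_mod_cast hterm) _

theorem Matrix.prod_factorial_dvd_factorial_mul_det_vandermonde {n : ℕ} (a : Fin n → ℕ)
    (m : ℕ) (h : ∑ i, a i ≤ m + ∑ i : Fin n, (i : ℕ)) :
    (∏ i, (a i)! : ℤ) ∣ m ! * (vandermonde fun i => (a i : ℤ)).det := by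
  rw [← det_descFactorial_eq_det_vandermonde]
  exact prod_factorial_dvd_factorial_mul_det_descFactorial a m h

theorem Nat.prod_factorial_add_dvd_superFactorial_mul_factorial (r s : ℕ) :
    ∏ i ∈ range (r + 1), (s + 1 + i)! ∣ superFactorial r * ((r + 1) * (s + 1))! := by
  have hsum : ∑ i : Fin (r + 1), (s + 1 + (i : ℕ)) =
      (r + 1) * (s + 1) + ∑ i : Fin (r + 1), (i : ℕ) := by
    rw [Finset.sum_add_distrib, Finset.sum_const, Finset.card_univ, Fintype.card_fin,
      smul_eq_mul]
  have hdet : (vandermonde fun i : Fin (r + 1) => ((s + 1 + (i : ℕ) : ℕ) : ℤ)).det =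
      superFactorial r := by
    have := det_vandermonde_add (fun i : Fin (r + 1) => ((i : ℕ) : ℤ)) ((s + 1 : ℕ) : ℤ)
    rw [det_vandermonde_id_eq_superFactorial] at this
    simpa only [Nat.cast_add, add_comm] using this
  have key := prod_factorial_dvd_factorial_mul_det_vandermonde
    (fun i : Fin (r + 1) => s + 1 + (i : ℕ)) ((r + 1) * (s + 1)) hsum.le
  rw [hdet, mul_comm] at key
  rw [← Fin.prod_univ_eq_prod_range (fun i => (s + 1 + i)!)]
  exact_mod_cast key

theorem castelnuovo_number_integral_general (r s : ℕ) :
    (∏ i ∈ Finset.range (r + 1), Nat.factorial (s + 1 + i)) ∣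
      (∏ i ∈ Finset.range (r + 1), Nat.factorial i) *
        Nat.factorial ((r + 1) * (s + 1)) ∧
    0 < ((∏ i ∈ Finset.range (r + 1), Nat.factorial i) *
          Nat.factorial ((r + 1) * (s + 1))) /
        (∏ i ∈ Finset.range (r + 1), Nat.factorial (s + 1 + i)) := by
  have hdvd : (∏ i ∈ range (r + 1), (s + 1 + i)!) ∣
      (∏ i ∈ range (r + 1), i !) * ((r + 1) * (s + 1))! := by
    rw [prod_range_succ_factorial]
    exact prod_factorial_add_dvd_superFactorial_mul_factorial r s
  have hpos : 0 < (∏ i ∈ range (r + 1), i !) * ((r + 1) * (s + 1))! :=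
    Nat.mul_pos (prod_pos fun i _ => factorial_pos i) (factorial_pos _)
  exact ⟨hdvd, Nat.div_pos (Nat.le_of_dvd hpos hdvd) (prod_pos fun i _ => factorial_pos _)⟩

/-- For all integers r ≥ 1 and s ≥ 1, with g = (r+1)(s+1), the product
(s+1)!·(s+2)!···(s+r+1)! divides (1!·2!···r!)·g!; consequently the Castelnuovo
number N = (1!·2!···r!·g!)/((s+1)!···(s+r+1)!) is a positive integer. -/
theorem castelnuovo_number_integral (r s : ℕ) (hr : 1 ≤ r) (hs : 1 ≤ s) :
    (∏ i ∈ Finset.range (r + 1), Nat.factorial (s + 1 + i)) ∣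
      (∏ i ∈ Finset.range (r + 1), Nat.factorial i) *
        Nat.factorial ((r + 1) * (s + 1)) ∧
    0 < ((∏ i ∈ Finset.range (r + 1), Nat.factorial i) *
          Nat.factorial ((r + 1) * (s + 1))) /
        (∏ i ∈ Finset.range (r + 1), Nat.factorial (s + 1 + i)) :=
  castelnuovo_number_integral_general r s
end

section
/- For all integers i ≥ 0 and s ≥ 0, set r = (i+2)s + 2(i+1), g = (r+1)(s+1) and d = r(s+2). Then (i+1)·C(r+2, i+2) = (2d+1−g)·C(r, i) − d·C(r−1, i−1), where C(n,k) denotes the binomial coefficient with the convention C(n,−1) = 0. -/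
/-- The binomial coefficient C(n,k) for integer arguments, with the convention
that C(n,k) = 0 when k < 0 or k > n. -/
def intChoose (n k : ℤ) : ℤ :=
  if 0 ≤ k ∧ k ≤ n then (n.toNat).choose k.toNat else 0

lemma intChoose_natCast (n k : ℕ) : intChoose (n : ℤ) (k : ℤ) = (n.choose k : ℤ) := by
  unfold intChoose
  by_cases h : (k : ℤ) ≤ (n : ℤ)
  · simp [h]
  · have hn : n < k := by exact_mod_cast not_le.mp h
    simp [h, Nat.choose_eq_zero_of_lt hn]

lemma intChoose_succ_mul (n k : ℤ) (hk : 0 ≤ k) (hn : k ≤ n) :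
    (k + 1) * intChoose (n + 1) (k + 1) = (n + 1) * intChoose n k := by
  lift n to ℕ using hk.trans hn
  lift k to ℕ using hk
  have h1 : ((n : ℤ) + 1) = ((n + 1 : ℕ) : ℤ) := by push_cast; ring
  have h2 : ((k : ℤ) + 1) = ((k + 1 : ℕ) : ℤ) := by push_cast; ring
  rw [h1, h2, intChoose_natCast, intChoose_natCast]
  have h := Nat.add_one_mul_choose_eq n k
  push_cast at h ⊢
  linarith

/-- For all integers i ≥ 0 and s ≥ 0, with r = (i+2)s + 2(i+1),
g = (r+1)(s+1) and d = r(s+2):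
(i+1)·C(r+2, i+2) = (2d+1−g)·C(r, i) − d·C(r−1, i−1),
where C(n,−1) = 0. -/
theorem syzygy_rank_equality (i s : ℤ) (hi : 0 ≤ i) (hs : 0 ≤ s)
    (r g d : ℤ) (hr : r = (i + 2) * s + 2 * (i + 1))
    (hg : g = (r + 1) * (s + 1)) (hd : d = r * (s + 2)) :
    (i + 1) * intChoose (r + 2) (i + 2)
      = (2 * d + 1 - g) * intChoose r i - d * intChoose (r - 1) (i - 1) := by
  have hir : i ≤ r := by nlinarith
  have hrpos : 0 < r := by nlinarith
  have h1 : (i + 2) * intChoose (r + 2) (i + 2) = (r + 2) * intChoose (r + 1) (i + 1) := by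
    have h := intChoose_succ_mul (r + 1) (i + 1) (by linarith) (by linarith)
    have e1 : r + 1 + 1 = r + 2 := by ring
    have e2 : i + 1 + 1 = i + 2 := by ring
    rw [e1, e2] at h
    exact h
  have h2 : (i + 1) * intChoose (r + 1) (i + 1) = (r + 1) * intChoose r i :=
    intChoose_succ_mul r i hi hir
  have h3 : i * intChoose r i = r * intChoose (r - 1) (i - 1) := by
    rcases eq_or_lt_of_le hi with h0 | h0
    · have hD0 : intChoose (r - 1) (i - 1) = 0 := by
        rw [intChoose, if_neg]
        omega
      rw [hD0, ← h0]; ring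
    · have h := intChoose_succ_mul (r - 1) (i - 1) (by omega) (by omega)
      have e1 : i - 1 + 1 = i := by ring
      have e2 : r - 1 + 1 = r := by ring
      rw [e1, e2] at h
      exact h
  have poly : r * (r + 2) * (r + 1) = (2 * d + 1 - g) * (i + 2) * r - d * i * (i + 2) := by
    subst hr hg hd; ring
  have hne : (i + 2) * r ≠ 0 := by positivity
  apply mul_left_cancel₀ hne
  linear_combination (r * (i + 1)) * h1 + (r * (r + 2)) * h2 - (d * (i + 2)) * h3
    + intChoose r i * poly
end

section
/- Let g ≥ 5 be an integer, set n = g − 3, and let M be the n×n matrix with integer entries defined by: M_{1,1} = g−1 and M_{1,j} = 0 for j ≥ 2; for 2 ≤ j ≤ n−1: M_{j,j−1} = −1, M_{j,j} = 1, M_{j,n} = g−1−j, and all other entries of row j are 0; M_{n,n−1} = −1, M_{n,n} = 2, and all other entries of row n are 0. Then det M ≠ 0 (M is nonsingular over ℚ). -/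
open Matrix Finset

private lemma sum_single' {n : ℕ} (f : Fin n → ℚ) (a : Fin n)
    (h : ∀ j, j ≠ a → f j = 0) : ∑ j, f j = f a := by
  rw [← Finset.sum_subset (Finset.subset_univ {a})]
  · simp
  · intro j _ hj; exact h j (by simpa using hj)

private lemma sum_two' {n : ℕ} (f : Fin n → ℚ) (a b : Fin n) (hab : a ≠ b)
    (h : ∀ j, j ≠ a → j ≠ b → f j = 0) : ∑ j, f j = f a + f b := by
  rw [← Finset.sum_subset (Finset.subset_univ {a, b})]
  · rw [Finset.sum_insert (by simpa using hab), Finset.sum_singleton]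
  · intro j _ hj
    simp only [Finset.mem_insert, Finset.mem_singleton, not_or] at hj
    exact h j hj.1 hj.2

private lemma sum_three' {n : ℕ} (f : Fin n → ℚ) (a b c : Fin n)
    (hab : a ≠ b) (hac : a ≠ c) (hbc : b ≠ c)
    (h : ∀ j, j ≠ a → j ≠ b → j ≠ c → f j = 0) :
    ∑ j, f j = f a + f b + f c := by
  rw [← Finset.sum_subset (Finset.subset_univ {a, b, c})]
  · rw [Finset.sum_insert (by simp [hab, hac]),
      Finset.sum_insert (by simpa using hbc), Finset.sum_singleton, add_assoc]
  · intro j _ hj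
    simp only [Finset.mem_insert, Finset.mem_singleton, not_or] at hj
    exact h j hj.1 hj.2.1 hj.2.2

/-- Let g ≥ 5, n = g−3, and let M be the n×n matrix (1-based indexing) with
M_{1,1} = g−1, M_{1,j} = 0 for j ≥ 2; for 2 ≤ j ≤ n−1: M_{j,j−1} = −1,
M_{j,j} = 1, M_{j,n} = g−1−j and all other entries 0; M_{n,n−1} = −1,
M_{n,n} = 2 and all other entries of row n zero.  Then det M ≠ 0. -/
theorem intersection_matrix_nonsingular (g : ℕ) (hg : 5 ≤ g) :
    Matrix.det (Matrix.of (fun i j : Fin (g - 3) =>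
      if (i : ℕ) + 1 = 1 then
        (if (j : ℕ) + 1 = 1 then (g : ℚ) - 1 else 0)
      else if (i : ℕ) + 1 = g - 3 then
        (if (j : ℕ) + 2 = g - 3 then -1
         else if (j : ℕ) + 1 = g - 3 then 2 else 0)
      else
        (if (j : ℕ) + 1 = (i : ℕ) then -1
         else if (j : ℕ) = (i : ℕ) then 1
         else if (j : ℕ) + 1 = g - 3 then (g : ℚ) - 1 - (((i : ℕ) : ℚ) + 1)
         else 0))) ≠ 0 := by
  set n := g - 3 with hn
  have hn2 : 2 ≤ n := by omega
  intro h0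
  obtain ⟨v, hv, hMv⟩ := (Matrix.exists_mulVec_eq_zero_iff).mpr h0
  have hrow : ∀ i : Fin n, (∑ j : Fin n,
      (if (i : ℕ) + 1 = 1 then
        (if (j : ℕ) + 1 = 1 then (g : ℚ) - 1 else 0)
      else if (i : ℕ) + 1 = n then
        (if (j : ℕ) + 2 = n then -1
         else if (j : ℕ) + 1 = n then 2 else 0)
      else
        (if (j : ℕ) + 1 = (i : ℕ) then -1
         else if (j : ℕ) = (i : ℕ) then 1
         else if (j : ℕ) + 1 = n then (g : ℚ) - 1 - (((i : ℕ) : ℚ) + 1)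
         else 0)) * v j) = 0 := by
    intro i
    have := congrFun hMv i
    simpa [Matrix.mulVec, dotProduct, Matrix.of_apply] using this
  -- v 0 = 0
  have hv0 : v ⟨0, by omega⟩ = 0 := by
    have h := hrow ⟨0, by omega⟩
    rw [sum_single' _ ⟨0, by omega⟩ (by
      intro j hj
      have hj' : (j : ℕ) ≠ 0 := fun hc => hj (Fin.ext hc)
      simp only [Fin.val_mk]
      split_ifs <;> first | (exfalso; omega) | exact zero_mul _)] at h
    have h' : ((g : ℚ) - 1) * v ⟨0, by omega⟩ = 0 := by simpa using h
    have hgQ : (5 : ℚ) ≤ (g : ℚ) := by exact_mod_cast hg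
    have hne : (g : ℚ) - 1 ≠ 0 := by linarith
    rcases mul_eq_zero.mp h' with h'' | h''
    · exact absurd h'' hne
    · exact h''
  -- middle rows
  have hmid : ∀ k : ℕ, ∀ hk : k + 1 ≤ n - 2,
      v ⟨k + 1, by omega⟩ = v ⟨k, by omega⟩
        - ((g : ℚ) - 1 - ((k : ℚ) + 1 + 1)) * v ⟨n - 1, by omega⟩ := by
    intro k hk
    have h := hrow ⟨k + 1, by omega⟩
    rw [sum_three' _ ⟨k, by omega⟩ ⟨k + 1, by omega⟩ ⟨n - 1, by omega⟩
      (by simp [Fin.ext_iff]) (by simp [Fin.ext_iff]; omega)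
      (by simp [Fin.ext_iff]; omega)
      (by
        intro j hj1 hj2 hj3
        have h1 : (j : ℕ) ≠ k := fun hc => hj1 (Fin.ext hc)
        have h2 : (j : ℕ) ≠ k + 1 := fun hc => hj2 (Fin.ext hc)
        have h3 : (j : ℕ) ≠ n - 1 := fun hc => hj3 (Fin.ext hc)
        simp only [Fin.val_mk]
        split_ifs <;> first | (exfalso; omega) | exact zero_mul _)] at h
    simp only [Fin.val_mk] at h
    split_ifs at h <;> try omega
    push_cast at h ⊢
    linarith [h]
  -- back substitution
  have key : ∀ k : ℕ, ∀ hk : k ≤ n - 2,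
      ∃ t : ℚ, t ≤ 0 ∧ v ⟨k, by omega⟩ = t * v ⟨n - 1, by omega⟩ := by
    intro k
    induction k with
    | zero => exact fun _ => ⟨0, le_refl 0, by rw [hv0, zero_mul]⟩
    | succ m ih =>
      intro hm
      obtain ⟨t, ht, hvt⟩ := ih (by omega)
      have hmm := hmid m hm
      refine ⟨t - ((g : ℚ) - 1 - ((m : ℚ) + 1 + 1)), ?_, ?_⟩
      · have hb : (m : ℕ) + 6 ≤ g := by omega
        have hbQ : (m : ℚ) + 6 ≤ (g : ℚ) := by exact_mod_cast hb
        linarith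
      · rw [hmm, hvt]; ring
  -- last row
  have hlast : v ⟨n - 1, by omega⟩ = 0 := by
    have h := hrow ⟨n - 1, by omega⟩
    rw [sum_two' _ ⟨n - 2, by omega⟩ ⟨n - 1, by omega⟩
      (by simp [Fin.ext_iff]; omega)
      (by
        intro j hj1 hj2
        have h1 : (j : ℕ) ≠ n - 2 := fun hc => hj1 (Fin.ext hc)
        have h2 : (j : ℕ) ≠ n - 1 := fun hc => hj2 (Fin.ext hc)
        simp only [Fin.val_mk]
        split_ifs <;> first | (exfalso; omega) | exact zero_mul _)] at h
    simp only [Fin.val_mk] at h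
    split_ifs at h <;> try omega
    obtain ⟨t, ht, hvt⟩ := key (n - 2) (le_refl _)
    rw [hvt] at h
    have h2t : (0:ℚ) < 2 - t := by linarith
    have hz : ((2 : ℚ) - t) * v ⟨n - 1, by omega⟩ = 0 := by linarith
    rcases mul_eq_zero.mp hz with h' | h'
    · exact absurd h' (ne_of_gt h2t)
    · exact h'
  -- hence v = 0
  apply hv
  funext i
  by_cases hi : (i : ℕ) = n - 1
  · have hie : i = ⟨n - 1, by omega⟩ := Fin.ext hi
    rw [hie, hlast]; rfl
  · have hi2 : (i : ℕ) ≤ n - 2 := by have := i.isLt; omega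
    obtain ⟨t, _, hvt⟩ := key i hi2
    have hie : i = ⟨(i : ℕ), i.isLt⟩ := Fin.ext rfl
    rw [hie, hvt, hlast, mul_zero]; rfl
end

section
/- Let r ≥ 1 and s ≥ 1 be integers, g = (r+1)(s+1), d = r(s+2), and ξ = 3(g−1) + (r−1)(g+r+1)(3g−2d+r−3)/(g−d+2r+1) ∈ ℚ. Define the rational numbers Aλ = d(gd−2g²+8d−8g+4)/((g−1)(g−2)), A₀ = d(2g²−gd+3g−4d−2)/(6(g−1)(g−2)), Bλ = 6d/(g−1), B₀ = −d/(2(g−1)), Cλ = (5r(r+2)−(g+3)ξ)/(2(g−1)(g−2)), C₀ = ((g+1)ξ−3r(r+2))/(12(g−1)(g−2)). Set P = ((r+1)/2)(−Aλ + Bλ) + (d+1−g)·Cλ − r and Q = ((r+1)/2)(−A₀ + B₀) + (d+1−g)·C₀. Then Q ≠ 0 and P/(−Q) = 6(2x + 7y² + 7xy + xy² + 12y + y³)/(y(4+y)(y+1+x)), where x = (r+1)+(s+1) and y = (r+1)(s+1). -/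
/-!
Substituting g = (r+1)(s+1) and d = r(s+2), the denominator of ξ becomes x = r+s+2 and
d + 1 - g = r - s.  Clearing denominators, both P and -Q turn out to be
r s / ((g-1)(g-2)x) times a polynomial in x and y = g: for -Q it is y(y+4)(y+1+x)/6, which
is positive, and for P it is the numerator of the claimed slope, so the common factor
cancels in P / (-Q).
-/

section SlopeAlgebra

variable {K : Type*} [Field K] {r s g d ξ : K}

theorem xi_eq_of_genus_degree (hg : g = (r + 1) * (s + 1)) (hd : d = r * (s + 2))
    (hxi : ξ = 3 * (g - 1) + (r - 1) * (g + r + 1) * (3 * g - 2 * d + r - 3) /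
      (g - d + 2 * r + 1)) :
    ξ = 3 * (g - 1) + (r - 1) * (r + 1) * (r + 3) * s * (s + 2) / (r + s + 2) := by
  have hden : g - d + 2 * r + 1 = r + s + 2 := by rw [hg, hd]; ring
  have hnum : (r - 1) * (g + r + 1) * (3 * g - 2 * d + r - 3) =
      (r - 1) * (r + 1) * (r + 3) * s * (s + 2) := by rw [hg, hd]; ring
  rw [hxi, hden, hnum]

theorem petri_delta_coeff_eq [CharZero K] {A0 B0 C0 Q : K}
    (hg : g = (r + 1) * (s + 1)) (hd : d = r * (s + 2))
    (hx : r + s + 2 ≠ 0) (hg1 : g - 1 ≠ 0) (hg2 : g - 2 ≠ 0)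
    (hxi : ξ = 3 * (g - 1) + (r - 1) * (r + 1) * (r + 3) * s * (s + 2) / (r + s + 2))
    (hA0 : A0 = d * (2 * g ^ 2 - g * d + 3 * g - 4 * d - 2) / (6 * (g - 1) * (g - 2)))
    (hB0 : B0 = -d / (2 * (g - 1)))
    (hC0 : C0 = ((g + 1) * ξ - 3 * r * (r + 2)) / (12 * (g - 1) * (g - 2)))
    (hQ : Q = ((r + 1) / 2) * (-A0 + B0) + (d + 1 - g) * C0) :
    Q = -(r * s * (g * (4 + g) * (g + 1 + (r + s + 2)))) /
      (6 * ((g - 1) * (g - 2) * (r + s + 2))) := by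
  subst hQ hA0 hB0 hC0 hxi hd
  field_simp
  subst hg
  ring

theorem petri_lambda_coeff_eq [CharZero K] {Alam Blam Clam P : K}
    (hg : g = (r + 1) * (s + 1)) (hd : d = r * (s + 2))
    (hx : r + s + 2 ≠ 0) (hg1 : g - 1 ≠ 0) (hg2 : g - 2 ≠ 0)
    (hxi : ξ = 3 * (g - 1) + (r - 1) * (r + 1) * (r + 3) * s * (s + 2) / (r + s + 2))
    (hAlam : Alam = d * (g * d - 2 * g ^ 2 + 8 * d - 8 * g + 4) / ((g - 1) * (g - 2)))
    (hBlam : Blam = 6 * d / (g - 1))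
    (hClam : Clam = (5 * r * (r + 2) - (g + 3) * ξ) / (2 * (g - 1) * (g - 2)))
    (hP : P = ((r + 1) / 2) * (-Alam + Blam) + (d + 1 - g) * Clam - r) :
    P = r * s * (2 * (r + s + 2) + 7 * g ^ 2 + 7 * (r + s + 2) * g + (r + s + 2) * g ^ 2
      + 12 * g + g ^ 3) / ((g - 1) * (g - 2) * (r + s + 2)) := by
  subst hP hAlam hBlam hClam hxi hd
  field_simp
  subst hg
  ring

end SlopeAlgebra

/-- The slope of the Gieseker–Petri divisor.  With g = (r+1)(s+1), d = r(s+2),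
ξ and the λ- and δ₀-coefficients Alam, A0, Blam, B0, Clam, C0 of the
pushforwards of the tautological classes as in the main theorem, and
P = ((r+1)/2)(−Alam+Blam) + (d+1−g)Clam − r,
Q = ((r+1)/2)(−A0+B0) + (d+1−g)C0,
we have Q ≠ 0 and P/(−Q) = 6(2x+7y²+7xy+xy²+12y+y³)/(y(4+y)(y+1+x)) where
x = (r+1)+(s+1), y = (r+1)(s+1). -/
theorem gieseker_petri_slope (r s : ℤ) (hr : 1 ≤ r) (hs : 1 ≤ s)
    (g d x y ξ Alam A0 Blam B0 Clam C0 P Q : ℚ)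
    (hg : g = ((r : ℚ) + 1) * ((s : ℚ) + 1))
    (hd : d = (r : ℚ) * ((s : ℚ) + 2))
    (hx : x = ((r : ℚ) + 1) + ((s : ℚ) + 1))
    (hy : y = ((r : ℚ) + 1) * ((s : ℚ) + 1))
    (hxi : ξ = 3 * (g - 1) +
      ((r : ℚ) - 1) * (g + (r : ℚ) + 1) * (3 * g - 2 * d + (r : ℚ) - 3) /
        (g - d + 2 * (r : ℚ) + 1))
    (hAlam : Alam = d * (g * d - 2 * g ^ 2 + 8 * d - 8 * g + 4) /
      ((g - 1) * (g - 2)))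
    (hA0 : A0 = d * (2 * g ^ 2 - g * d + 3 * g - 4 * d - 2) /
      (6 * (g - 1) * (g - 2)))
    (hBlam : Blam = 6 * d / (g - 1))
    (hB0 : B0 = -d / (2 * (g - 1)))
    (hClam : Clam = (5 * (r : ℚ) * ((r : ℚ) + 2) - (g + 3) * ξ) /
      (2 * (g - 1) * (g - 2)))
    (hC0 : C0 = ((g + 1) * ξ - 3 * (r : ℚ) * ((r : ℚ) + 2)) /
      (12 * (g - 1) * (g - 2)))
    (hP : P = (((r : ℚ) + 1) / 2) * (-Alam + Blam) + (d + 1 - g) * Clam - (r : ℚ))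
    (hQ : Q = (((r : ℚ) + 1) / 2) * (-A0 + B0) + (d + 1 - g) * C0) :
    Q ≠ 0 ∧
    P / (-Q) = 6 * (2 * x + 7 * y ^ 2 + 7 * x * y + x * y ^ 2 + 12 * y + y ^ 3) /
      (y * (4 + y) * (y + 1 + x)) := by
  have hr' : (1 : ℚ) ≤ r := by exact_mod_cast hr
  have hs' : (1 : ℚ) ≤ s := by exact_mod_cast hs
  have hx0 : (r : ℚ) + s + 2 ≠ 0 := by linarith
  have hg1 : g - 1 ≠ 0 := by rw [hg]; nlinarith
  have hg2 : g - 2 ≠ 0 := by rw [hg]; nlinarith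
  have hξ := xi_eq_of_genus_degree hg hd hxi
  rw [petri_delta_coeff_eq hg hd hx0 hg1 hg2 hξ hA0 hB0 hC0 hQ,
    petri_lambda_coeff_eq hg hd hx0 hg1 hg2 hξ hAlam hBlam hClam hP]
  rw [hy, ← hg, hx, show (r : ℚ) + 1 + (s + 1) = r + s + 2 by ring]
  have hrs : (r : ℚ) * s ≠ 0 := by positivity
  have hM : g * (4 + g) * (g + 1 + (r + s + 2)) ≠ 0 := by rw [hg]; positivity
  refine ⟨div_ne_zero (neg_ne_zero.2 (mul_ne_zero hrs hM)) (by positivity), ?_⟩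
  field_simp
end

section
/- Let r ≥ 1 and s ≥ 1 be integers, g = (r+1)(s+1), d = r(s+2), and N = (∏_{i=0}^r i!)·g! / ∏_{i=0}^r (s+1+i)!. Define a₀ = 1, a₁ = 3, and a_i = i+3 for 2 ≤ i ≤ r. Then (g−3)! · ∏_{0 ≤ i < j ≤ r} (a_j − a_i) / ∏_{i=0}^r (g−3−d+r+a_i)! = d(2g−2−d)N / (3(g−1)(g−2)), an identity of positive rational numbers (all factorial arguments g−3−d+r+a_i = s−2+a_i are nonnegative). -/
/-!
With `a = (1, 3, 5, 6, …, r + 3)` the Vandermonde product differs from that of `(0, 1, …, r)`,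
namely `∏ i!`, only by the telescoping factors `(j + 2) / (j - 1)` for `j ≥ 2` and `2` for
`j = 1`, which gives `r (r + 1) (r + 2) / 3 · ∏ i!`. Likewise the factorials `(s - 2 + a_i)!`
differ from `(s + 1 + i)!` only at `i = 0, 1`, by the factor `s (s + 1) (s + 2)`. Since
`g = (r + 1)(s + 1)` and `d (2g - 2 - d) = r s (r + 2) (s + 2)`, what is left is
`g! = g (g - 1) (g - 2) (g - 3)!`.
-/

open Nat Finset

/-- The sequence `a = (1, 3, 5, 6, 7, …)`, i.e. `a_i = b_i + i` for `b = (…, 3, 3, 2, 1)`. -/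
def schubertIndex : ℕ → ℕ
  | 0 => 1
  | 1 => 3
  | i + 2 => i + 5

lemma eq_schubertIndex_of_le {a : ℕ → ℕ} {r : ℕ} (ha0 : a 0 = 1) (ha1 : a 1 = 3)
    (ha : ∀ i, 2 ≤ i → i ≤ r → a i = i + 3) : ∀ {i}, i ≤ r → a i = schubertIndex i
  | 0, _ => ha0
  | 1, _ => ha1
  | i + 2, hi => by rw [ha _ (by omega) hi, schubertIndex]

lemma prod_prod_sub_congr {R : Type*} [CommRing R] {a b : ℕ → R} {n : ℕ}
    (h : ∀ i < n, a i = b i) :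
    ∏ j ∈ range n, ∏ i ∈ range j, (a j - a i) = ∏ j ∈ range n, ∏ i ∈ range j, (b j - b i) :=
  prod_congr rfl fun j hj => prod_congr rfl fun i hi => by
    rw [mem_range] at hi hj
    rw [h j hj, h i (hi.trans hj)]

lemma prod_range_schubertIndex_sub (j : ℕ) :
    ∏ i ∈ range (j + 2), ((schubertIndex (j + 2) : ℚ) - schubertIndex i)
      = (j + 4) * (j + 2) * j ! := by
  have hshift : ∀ i ∈ range j,
      ((schubertIndex (j + 2) : ℚ) - schubertIndex (i + 2)) = (j : ℚ) - i := by
    intro i _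
    simp only [schubertIndex]
    push_cast
    ring
  rw [prod_range_succ', prod_range_succ', prod_congr rfl hshift, prod_range_natCast_sub,
    ← descFactorial_eq_prod_range, descFactorial_self]
  simp only [schubertIndex]
  push_cast
  ring

lemma three_mul_prod_prod_schubertIndex_sub (m : ℕ) :
    3 * ∏ j ∈ range (m + 2), ∏ i ∈ range j,
        ((schubertIndex j : ℚ) - schubertIndex i)
      = (m + 1) * (m + 2) * (m + 3) * ∏ i ∈ range (m + 2), (i ! : ℚ) := by
  induction m with
  | zero =>
    norm_num [prod_range_succ, schubertIndex]
  | succ m ih =>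
    rw [prod_range_succ, prod_range_succ (fun i => (i ! : ℚ)), prod_range_schubertIndex_sub,
      ← mul_assoc, ih, factorial_succ, factorial_succ]
    push_cast
    ring

lemma prod_factorial_add_eq_mul_prod_factorial_schubertIndex {s : ℕ} (hs : 1 ≤ s) (m : ℕ) :
    ∏ i ∈ range (m + 2), (s + 1 + i) !
      = s * (s + 1) * (s + 2) * ∏ i ∈ range (m + 2), (s + schubertIndex i - 2) ! := by
  obtain ⟨t, rfl⟩ : ∃ t, s = t + 1 := ⟨s - 1, by omega⟩
  have hshift : ∀ i ∈ range m, (t + 1 + schubertIndex (i + 2) - 2) ! = (t + 1 + 1 + (i + 2)) ! :=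
    fun i _ => by simp only [schubertIndex]; congr 1; omega
  rw [prod_range_succ', prod_range_succ', prod_range_succ' (fun i => (t + 1 + _ - 2) !),
    prod_range_succ', prod_congr rfl hshift]
  simp only [schubertIndex, show t + 1 + 1 - 2 = t by omega, show t + 1 + 3 - 2 = t + 2 by omega,
    factorial_succ]
  ring

lemma cast_factorial_eq_mul_factorial_sub_three {R : Type*} [CommRing R] {n : ℕ} (hn : 3 ≤ n) :
    (n ! : R) = n * (n - 1) * (n - 2) * (n - 3 : ℕ) ! := by
  obtain ⟨k, rfl⟩ : ∃ k, n = k + 3 := ⟨n - 3, by omega⟩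
  simp only [add_tsub_cancel_right, factorial_succ]
  push_cast
  ring

/-- Schubert-calculus evaluation for b = (3,3,…,3,2,1), i.e. a = (1,3,5,6,…,r+3),
and k = g−3: with g = (r+1)(s+1), d = r(s+2) and N the Castelnuovo number,
(g−3)!·∏_{i<j}(a_j−a_i)/∏_i (g−3−d+r+a_i)! = d(2g−2−d)N/(3(g−1)(g−2)),
an identity of positive rational numbers (all factorial arguments
g−3−d+r+a_i = s−2+a_i are nonnegative). -/
theorem schubert_evaluation_class_a (r s : ℕ) (hr : 1 ≤ r) (hs : 1 ≤ s)
    (g d : ℕ) (hg : g = (r + 1) * (s + 1)) (hd : d = r * (s + 2))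
    (N : ℚ)
    (hN : N = (((∏ i ∈ Finset.range (r + 1), Nat.factorial i) *
        Nat.factorial g : ℕ) : ℚ) /
      ((∏ i ∈ Finset.range (r + 1), Nat.factorial (s + 1 + i) : ℕ) : ℚ))
    (a : ℕ → ℕ) (ha0 : a 0 = 1) (ha1 : a 1 = 3)
    (ha : ∀ i, 2 ≤ i → i ≤ r → a i = i + 3) :
    (Nat.factorial (g - 3) : ℚ) *
        (∏ j ∈ Finset.range (r + 1), ∏ i ∈ Finset.range j,
          ((a j : ℚ) - (a i : ℚ))) /
        (∏ i ∈ Finset.range (r + 1),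
          (Nat.factorial (g + r + a i - (d + 3)) : ℚ))
      = (d : ℚ) * (2 * (g : ℚ) - 2 - (d : ℚ)) * N /
        (3 * ((g : ℚ) - 1) * ((g : ℚ) - 2)) ∧
    0 < (d : ℚ) * (2 * (g : ℚ) - 2 - (d : ℚ)) * N /
        (3 * ((g : ℚ) - 1) * ((g : ℚ) - 2)) := by
  obtain ⟨m, rfl⟩ : ∃ m, r = m + 1 := ⟨r - 1, by omega⟩
  have ha' : ∀ i < m + 2, a i = schubertIndex i := fun i hi =>
    eq_schubertIndex_of_le ha0 ha1 ha (by omega)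
  have hV := prod_prod_sub_congr (R := ℚ) fun i hi => congrArg Nat.cast (ha' i hi)
  have hgd : g + (m + 1) = d + s + 1 := by subst hg hd; ring
  have hD : ∏ i ∈ range (m + 1 + 1), ((g + (m + 1) + a i - (d + 3)) ! : ℚ)
      = ∏ i ∈ range (m + 2), ((s + schubertIndex i - 2) ! : ℚ) :=
    prod_congr rfl fun i hi => by
      rw [ha' i (mem_range.mp hi), show g + (m + 1) + schubertIndex i - (d + 3)
        = s + schubertIndex i - 2 by omega]
  have hP : ∏ i ∈ range (m + 2), ((s + 1 + i) ! : ℚ)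
      = s * (s + 1) * (s + 2) * ∏ i ∈ range (m + 2), ((s + schubertIndex i - 2) ! : ℚ) := by
    exact_mod_cast prod_factorial_add_eq_mul_prod_factorial_schubertIndex hs m
  have hVand : ∏ j ∈ range (m + 2), ∏ i ∈ range j, ((schubertIndex j : ℚ) - schubertIndex i)
      = (m + 1) * (m + 2) * (m + 3) * (∏ i ∈ range (m + 2), (i ! : ℚ)) / 3 := by
    linear_combination three_mul_prod_prod_schubertIndex_sub m / 3
  have hfac : (g ! : ℚ) = g * (g - 1) * (g - 2) * (g - 3 : ℕ) ! :=
    cast_factorial_eq_mul_factorial_sub_three (by subst hg; nlinarith)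
  have hgq : (g : ℚ) = (m + 2) * (s + 1) := by subst hg; push_cast; ring
  have hdq : (d : ℚ) = (m + 1) * (s + 2) := by subst hd; push_cast; ring
  have hsq : (1 : ℚ) ≤ s := by exact_mod_cast hs
  have hg2 : (0 : ℚ) < g - 2 := by rw [hgq]; nlinarith
  have hg1 : (0 : ℚ) < g - 1 := by linarith
  refine ⟨?_, ?_⟩
  · rw [hV, hVand, hD, hN]
    push_cast
    rw [hP, hfac]
    field_simp
    rw [hgq, hdq]
    ring
  · have h2gd : 2 * (g : ℚ) - 2 - d = s * (m + 3) := by rw [hgq, hdq]; ring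
    have hd0 : (0 : ℚ) < d := by rw [hdq]; positivity
    have hN0 : 0 < N := by rw [hN]; positivity
    rw [h2gd]
    exact _root_.div_pos (mul_pos (mul_pos hd0 (mul_pos (by linarith) (by positivity))) hN0)
      (mul_pos (mul_pos three_pos hg1) hg2)
end

section
/- Let r ≥ 2 and s ≥ 1 be integers, g = (r+1)(s+1), d = r(s+2), and N = (∏_{i=0}^r i!)·g! / ∏_{i=0}^r (s+1+i)!. Define a₀ = 0, a₁ = 2, a_i = i+2 for 2 ≤ i ≤ r−1, and a_r = r+3. Then (g−2)! · ∏_{0 ≤ i < j ≤ r} (a_j − a_i) / ∏_{i=0}^r (g−2−d+r+a_i)! = (r−1)(g+r+1)(3g−2d+r−3)·N / (3(g−1)(g−d+2r+1)), an identity of rational numbers (all factorial arguments g−2−d+r+a_i = s−1+a_i are nonnegative). -/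
/-!
Compare everything with the Castelnuovo number. The Vandermonde product of
`a = (0, 2, 4, 5, …, r + 1, r + 3)` is that of `(0, 1, …, r)`, i.e. `∏ i!`, times
`(r - 1)(r + 1)²(r + 3)/3`; the factorials `(s - 1 + a i)!` agree with `(s + 1 + i)!` except at
`i = 0, 1, r`, which costs a factor `(s + r + 2)/(s(s + 1)(s + 2))`. With `g! = g(g - 1)(g - 2)!`,
`3g - 2d + r - 3 = s(r + 3)` and `g - d + 2r + 1 = r + s + 2`, the identity becomes polynomial.
-/

open Finset Nat

theorem prod_Ico_sub_eq_factorial (m n : ℕ) :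
    ∏ i ∈ Ico m n, (n - i) = (n - m)! := by
  rw [prod_Ico_eq_prod_range, ← descFactorial_self, descFactorial_eq_prod_range]
  exact prod_congr rfl fun k _ => by omega

theorem prod_Ico_natCast_sub {R : Type*} [CommRing R] (m n : ℕ) :
    ∏ i ∈ Ico m n, ((n : R) - i) = (n - m)! := by
  rw [← prod_Ico_sub_eq_factorial, Nat.cast_prod]
  exact prod_congr rfl fun i hi => (Nat.cast_sub (mem_Ico.1 hi).2.le).symm

theorem prod_range_succ_eq_mul_prod_Ico_mul {M : Type*} [CommMonoid M] (f : ℕ → M) {n : ℕ}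
    (hn : 2 ≤ n) : ∏ i ∈ range (n + 1), f i = f 0 * f 1 * (∏ i ∈ Ico 2 n, f i) * f n := by
  rw [prod_range_succ, ← prod_range_mul_prod_Ico f hn, prod_range_succ, prod_range_one]

/-- `(j + 2) j (j - 2)! = j! (j + 2)/(j - 1)`, and the factors `(j + 2)/(j - 1)` telescope. -/
theorem six_mul_prod_Ico_two_add_two_mul_mul_factorial {n : ℕ} (hn : 2 ≤ n) :
    6 * ∏ j ∈ Ico 2 n, ((j + 2) * j * (j - 2)!) = (n + 1) * n * (n - 1) * ∏ j ∈ range n, j ! := by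
  induction n, hn using Nat.le_induction with
  | base => decide
  | succ n hn ih =>
    rw [prod_Ico_succ_top hn, prod_range_succ, ← mul_assoc, ih,
      ← mul_factorial_pred (by omega : n ≠ 0), ← mul_factorial_pred (by omega : n - 1 ≠ 0),
      Nat.add_sub_cancel, Nat.sub_sub]
    ring

def vandermondeProd {R : Type*} [CommRing R] (a : ℕ → R) (n : ℕ) : R :=
  ∏ j ∈ range n, ∏ i ∈ range j, (a j - a i)

section

variable {r : ℕ} {a : ℕ → ℕ} (hr : 2 ≤ r) (ha0 : a 0 = 0) (ha1 : a 1 = 2)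
  (ha : ∀ i, 2 ≤ i → i ≤ r - 1 → a i = i + 2) (har : a r = r + 3)
include hr ha0 ha1 ha

theorem prod_range_sub_of_lt {j : ℕ} (hj : 2 ≤ j) (hjr : j < r) :
    ∏ i ∈ range j, ((a j : ℚ) - a i) = (j + 2) * j * (j - 2)! := by
  rw [← prod_range_mul_prod_Ico _ hj, prod_range_succ, prod_range_one,
    prod_congr rfl fun i hi => ?_, prod_Ico_natCast_sub, ha j hj (by omega), ha0, ha1]
  · push_cast; ring
  · rw [ha j hj (by omega), ha i (mem_Ico.1 hi).1 (by have := (mem_Ico.1 hi).2; omega)]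
    push_cast; ring

include har in
theorem prod_range_sub_top :
    ∏ i ∈ range r, ((a r : ℚ) - a i) = (r + 3) * (r + 1) * (r - 1)! := by
  have hIco : ∏ i ∈ Ico 2 r, ((r : ℚ) + 1 - i) = (r - 1)! := by
    have := prod_Ico_natCast_sub (R := ℚ) 2 (r + 1)
    rwa [prod_Ico_succ_top hr, Nat.cast_succ, add_sub_cancel_left, mul_one,
      show r + 1 - 2 = r - 1 by omega] at this
  rw [← prod_range_mul_prod_Ico _ hr, prod_range_succ, prod_range_one,
    prod_congr rfl fun i hi => ?_, hIco, har, ha0, ha1]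
  · push_cast; ring
  · rw [har, ha i (mem_Ico.1 hi).1 (by have := (mem_Ico.1 hi).2; omega)]
    push_cast; ring

include har in
theorem three_mul_vandermondeProd_eq :
    3 * vandermondeProd (fun i => (a i : ℚ)) (r + 1) =
      (r - 1) * (r + 1) ^ 2 * (r + 3) * ∏ i ∈ range (r + 1), (i ! : ℚ) := by
  have hmid := congrArg (Nat.cast (R := ℚ)) (six_mul_prod_Ico_two_add_two_mul_mul_factorial hr)
  push_cast [Nat.cast_sub (by omega : 1 ≤ r)] at hmid
  rw [vandermondeProd, prod_range_succ_eq_mul_prod_Ico_mul _ hr,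
    prod_congr rfl fun j hj => prod_range_sub_of_lt hr ha0 ha1 ha (mem_Ico.1 hj).1 (mem_Ico.1 hj).2,
    prod_range_sub_top hr ha0 ha1 ha har, prod_range_succ _ r, ← mul_factorial_pred (by omega : r ≠ 0)]
  simp only [prod_range_zero, prod_range_one, ha0, ha1]
  push_cast [Nat.cast_sub (by omega : 1 ≤ r)]
  linear_combination ((r + 3) * (r + 1) * (r - 1)! : ℚ) * hmid

include har in
theorem prod_factorial_sub_one_add_mul_eq {s : ℕ} (hs : 1 ≤ s) :
    (∏ i ∈ range (r + 1), (s - 1 + a i)!) * (s * (s + 1) * (s + 2)) =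
      (s + r + 2) * ∏ i ∈ range (r + 1), (s + 1 + i)! := by
  obtain ⟨t, rfl⟩ : ∃ t, s = t + 1 := ⟨s - 1, by omega⟩
  rw [Nat.add_sub_cancel, prod_range_succ_eq_mul_prod_Ico_mul _ hr,
    prod_range_succ_eq_mul_prod_Ico_mul _ hr, ha0, ha1, har,
    prod_congr rfl fun i hi => by
      rw [ha i (mem_Ico.1 hi).1 (by have := (mem_Ico.1 hi).2; omega),
        show t + (i + 2) = t + 1 + 1 + i by omega]]
  rw [show t + (r + 3) = t + 1 + 1 + r + 1 by omega]
  simp only [factorial_succ, add_zero]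
  ring

end

/-- Schubert-calculus evaluation for b = (3,2,…,2,1,0), i.e.
a = (0,2,4,5,…,r+1,r+3), and k = g−2: with g = (r+1)(s+1), d = r(s+2)
and N the Castelnuovo number,
(g−2)!·∏_{i<j}(a_j−a_i)/∏_i (g−2−d+r+a_i)!
  = (r−1)(g+r+1)(3g−2d+r−3)·N/(3(g−1)(g−d+2r+1)),
an identity of rational numbers (all factorial arguments
g−2−d+r+a_i = s−1+a_i are nonnegative). -/
theorem schubert_evaluation_class_c (r s : ℕ) (hr : 2 ≤ r) (hs : 1 ≤ s)
    (g d : ℕ) (hg : g = (r + 1) * (s + 1)) (hd : d = r * (s + 2))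
    (N : ℚ)
    (hN : N = (((∏ i ∈ Finset.range (r + 1), Nat.factorial i) *
        Nat.factorial g : ℕ) : ℚ) /
      ((∏ i ∈ Finset.range (r + 1), Nat.factorial (s + 1 + i) : ℕ) : ℚ))
    (a : ℕ → ℕ) (ha0 : a 0 = 0) (ha1 : a 1 = 2)
    (ha : ∀ i, 2 ≤ i → i ≤ r - 1 → a i = i + 2) (har : a r = r + 3) :
    (Nat.factorial (g - 2) : ℚ) *
        (∏ j ∈ Finset.range (r + 1), ∏ i ∈ Finset.range j,
          ((a j : ℚ) - (a i : ℚ))) /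
        (∏ i ∈ Finset.range (r + 1),
          (Nat.factorial (g + r + a i - (d + 2)) : ℚ))
      = ((r : ℚ) - 1) * ((g : ℚ) + (r : ℚ) + 1) *
          (3 * (g : ℚ) - 2 * (d : ℚ) + (r : ℚ) - 3) * N /
        (3 * ((g : ℚ) - 1) * ((g : ℚ) - (d : ℚ) + 2 * (r : ℚ) + 1)) := by
  have hgd : g + r = d + s + 1 := by rw [hg, hd]; ring
  have hg2 : 2 ≤ g := by rw [hg]; nlinarith
  have hfac : (g ! : ℚ) = g * (g - 1) * (g - 2)! := by
    rw [← mul_factorial_pred (by omega : g ≠ 0), ← mul_factorial_pred (by omega : g - 1 ≠ 0),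
      Nat.sub_sub]
    push_cast [Nat.cast_sub (by omega : 1 ≤ g)]
    ring
  have hV := three_mul_vandermondeProd_eq hr ha0 ha1 ha har
  have hD := congrArg (Nat.cast (R := ℚ)) (prod_factorial_sub_one_add_mul_eq hr ha0 ha1 ha har hs)
  unfold vandermondeProd at hV
  push_cast at hD
  simp only [show ∀ i, g + r + a i - (d + 2) = s - 1 + a i by omega]
  rw [hN, eq_div_of_mul_eq three_ne_zero ((mul_comm _ _).trans hV),
    eq_div_of_mul_eq (by positivity) hD]
  push_cast
  have hgq : (g : ℚ) = (r + 1) * (s + 1) := by rw [hg]; push_cast; ring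
  have hdq : (d : ℚ) = r * (s + 2) := by rw [hd]; push_cast; ring
  have hg1 : (g : ℚ) - 1 ≠ 0 := sub_ne_zero.2 (by norm_cast; omega)
  rw [hfac, show (g : ℚ) - d + 2 * r + 1 = r + s + 2 by rw [hgq, hdq]; ring,
    show 3 * (g : ℚ) - 2 * d + r - 3 = s * (r + 3) by rw [hgq, hdq]; ring]
  field_simp
  rw [hgq]
  ring
end

section
/- For all integers r ≥ 1 and s ≥ 1, with g = (r+1)(s+1), d = r(s+2), and N = (∏_{i=0}^r i!)·g! / ∏_{i=0}^r (s+1+i)!, both dN/(2(g−1)) and (2g−2−d)N/(2(g−1)) are positive integers. -/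
/-!
Both counts are numbers of standard Young tableaux: in a standard tableau of the
`(r+1) × (s+1)` rectangle the entries `g - 1, g` fill a vertical or a horizontal domino at
the corner, so the counts are `f^λ` for the rectangle minus that domino. By Frobenius'
formula `f^λ = n! · Δ(ℓ) / ∏ ℓᵢ!` in the shifted row lengths `ℓ`, the ratio to `N` is, up to
factorials, a ratio of Vandermonde determinants, computed by peeling off the shortest rows.
That the Frobenius quotient is a positive integer is shown directly: in the falling-factorial
basis every term of the Leibniz expansion of `Δ(ℓ)` becomes `∏ ℓᵢ! / ∏ (ℓᵢ - i)!`, and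
`∏ (ℓᵢ - i)!` divides `n!` since `∑ (ℓᵢ - i) = n`.
-/

open Finset Nat Matrix

theorem prod_factorial_dvd_prod_descFactorial_mul_factorial {k n : ℕ} (ℓ : Fin k → ℕ)
    (hℓ : ∑ i, ℓ i = n + ∑ i : Fin k, (i : ℕ)) :
    ∏ i, (ℓ i)! ∣ (∏ i, (ℓ i).descFactorial i) * n ! := by
  by_cases h : ∀ i : Fin k, (i : ℕ) ≤ ℓ i
  · have hsum : ∑ i, (ℓ i - i) = n := by
      have : ∑ i, (ℓ i - i) + ∑ i : Fin k, (i : ℕ) = ∑ i, ℓ i := by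
        rw [← sum_add_distrib]
        exact sum_congr rfl fun i _ => Nat.sub_add_cancel (h i)
      omega
    calc ∏ i, (ℓ i)! = (∏ i, (ℓ i).descFactorial i) * ∏ i, (ℓ i - i)! := by
          rw [← prod_mul_distrib]
          exact prod_congr rfl fun i _ => by rw [mul_comm, factorial_mul_descFactorial (h i)]
      _ ∣ (∏ i, (ℓ i).descFactorial i) * n ! :=
          mul_dvd_mul_left _ (hsum ▸ prod_factorial_dvd_factorial_sum _ _)
  · push Not at h
    obtain ⟨i, hi⟩ := h
    rw [prod_eq_zero (f := fun i : Fin k => (ℓ i).descFactorial i) (mem_univ i)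
      (descFactorial_eq_zero_iff_lt.2 hi), zero_mul]
    exact dvd_zero _

theorem prod_factorial_dvd_det_vandermonde_mul_factorial {k n : ℕ} (ℓ : Fin k → ℕ)
    (hℓ : ∑ i, ℓ i = n + ∑ i : Fin k, (i : ℕ)) :
    ((∏ i, (ℓ i)! : ℕ) : ℤ) ∣ (vandermonde fun i => (ℓ i : ℤ)).det * n ! := by
  rw [det_eval_matrixOfPolynomials_eq_det_vandermonde _ (fun i => descPochhammer ℤ i)
      (fun i => descPochhammer_natDegree ℤ i) (fun i => monic_descPochhammer ℤ i),
    det_apply, sum_mul]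
  refine dvd_sum fun σ _ => ?_
  rw [smul_mul_assoc, Units.smul_def, smul_eq_mul]
  refine Dvd.dvd.mul_left ?_ _
  have hσ := prod_factorial_dvd_prod_descFactorial_mul_factorial (ℓ ∘ σ)
    (by rw [← hℓ]; exact Equiv.sum_comp σ ℓ)
  simp only [Function.comp_apply, Equiv.prod_comp σ fun i => (ℓ i)!] at hσ
  simp only [of_apply, descPochhammer_eval_eq_descFactorial]
  exact_mod_cast hσ

/-- For the shifted row lengths `ℓ i = λ (k - 1 - i) + i` of a partition `λ` of `n` into at most
`k` parts (shortest row first), this is Frobenius' formula for the number of standard Young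
tableaux of shape `λ`. -/
def frobeniusQuotient {k : ℕ} (n : ℕ) (ℓ : Fin k → ℕ) : ℚ :=
  n ! * (vandermonde fun i => (ℓ i : ℚ)).det / ∏ i, ((ℓ i)! : ℚ)

theorem det_vandermonde_pos {R : Type*} [CommRing R] [PartialOrder R] [IsStrictOrderedRing R]
    {k : ℕ} {v : Fin k → R} (hv : StrictMono v) :
    0 < (vandermonde v).det := by
  rw [det_vandermonde]
  exact prod_pos fun i _ => prod_pos fun j hj => sub_pos.2 (hv (mem_Ioi.1 hj))

theorem exists_pos_nat_eq_frobeniusQuotient {k n : ℕ} {ℓ : Fin k → ℕ} (hmono : StrictMono ℓ)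
    (hℓ : ∑ i, ℓ i = n + ∑ i : Fin k, (i : ℕ)) :
    ∃ a : ℕ, 0 < a ∧ frobeniusQuotient n ℓ = a := by
  obtain ⟨z, hz⟩ := prod_factorial_dvd_det_vandermonde_mul_factorial ℓ hℓ
  have hcast : (vandermonde fun i => (ℓ i : ℚ)).det =
      ((vandermonde fun i => (ℓ i : ℤ)).det : ℚ) := by
    simp [det_vandermonde]
  have hprod : (0 : ℚ) < ∏ i, ((ℓ i)! : ℚ) := prod_pos fun i _ => by positivity
  have hq : frobeniusQuotient n ℓ = z := by
    rw [frobeniusQuotient, hcast, div_eq_iff hprod.ne', mul_comm, ← Int.cast_natCast,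
      ← Int.cast_mul, hz]
    push_cast; ring
  have hpos : 0 < frobeniusQuotient n ℓ := by
    unfold frobeniusQuotient
    have := det_vandermonde_pos (v := fun i => (ℓ i : ℚ)) fun i j h => Nat.cast_lt.2 (hmono h)
    positivity
  have hz0 : 0 < z := by exact_mod_cast hq ▸ hpos
  refine ⟨z.toNat, by omega, ?_⟩
  rw [hq]
  exact_mod_cast (Int.toNat_of_nonneg hz0.le).symm

theorem det_vandermonde_natCast_cons {R : Type*} [CommRing R] {k : ℕ} (x : ℕ) (v : Fin k → ℕ) :
    (vandermonde fun i => ((Fin.cons x v : Fin (k + 1) → ℕ) i : R)).det =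
      (∏ i, ((v i : R) - x)) * (vandermonde fun i => (v i : R)).det := by
  rw [det_vandermonde, det_vandermonde, Fin.prod_univ_succ]
  congr 1
  · rw [Fin.prod_Ioi_zero]; simp
  · exact prod_congr rfl fun i _ => by rw [Fin.prod_Ioi_succ]; simp

def rectangle (k c : ℕ) : Fin k → ℕ := fun i => c + i

def rectangleMinusVerticalDomino (k c : ℕ) : Fin (k + 2) → ℕ :=
  Fin.cons c (Fin.cons (c + 1) (rectangle k (c + 3)))

def rectangleMinusHorizontalDomino (k c : ℕ) : Fin (k + 1) → ℕ :=
  Fin.cons c (rectangle k (c + 3))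

theorem rectangle_succ (k c : ℕ) : rectangle (k + 1) c = Fin.cons c (rectangle k (c + 1)) := by
  ext i
  refine Fin.cases ?_ (fun i => ?_) i
  · simp [rectangle]
  · simp [rectangle]; omega

theorem strictMono_rectangle (k c : ℕ) : StrictMono (rectangle k c) :=
  fun _ _ h => Nat.add_lt_add_left h c

theorem sum_rectangle (k c : ℕ) : ∑ i, rectangle k c i = k * c + ∑ i : Fin k, (i : ℕ) := by
  simp [rectangle, sum_add_distrib]

theorem sum_val_fin_succ (k : ℕ) : ∑ i : Fin (k + 1), (i : ℕ) = ∑ i : Fin k, (i : ℕ) + k := by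
  simp [Fin.sum_univ_succ, sum_add_distrib]

theorem strictMono_rectangleMinusVerticalDomino (k c : ℕ) :
    StrictMono (rectangleMinusVerticalDomino k c) := by
  simp only [rectangleMinusVerticalDomino, Fin.strictMono_cons, Fin.forall_fin_succ,
    Fin.cons_zero, Fin.cons_succ, strictMono_rectangle, rectangle]
  exact ⟨⟨by omega, fun _ => by omega⟩, fun _ => by omega, trivial⟩

theorem strictMono_rectangleMinusHorizontalDomino (k c : ℕ) :
    StrictMono (rectangleMinusHorizontalDomino k c) := by
  simp only [rectangleMinusHorizontalDomino, Fin.strictMono_cons, strictMono_rectangle, rectangle]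
  exact ⟨fun _ => by omega, trivial⟩

theorem sum_rectangleMinusVerticalDomino {k c g : ℕ} (hg : g = (k + 2) * (c + 1)) :
    ∑ i, rectangleMinusVerticalDomino k c i = g - 2 + ∑ i : Fin (k + 2), (i : ℕ) := by
  simp only [rectangleMinusVerticalDomino, Fin.sum_cons, sum_rectangle, sum_val_fin_succ]
  subst hg
  ring_nf
  omega

theorem sum_rectangleMinusHorizontalDomino {k c g : ℕ} (hg : g = (k + 1) * (c + 2)) :
    ∑ i, rectangleMinusHorizontalDomino k c i = g - 2 + ∑ i : Fin (k + 1), (i : ℕ) := by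
  simp only [rectangleMinusHorizontalDomino, Fin.sum_cons, sum_rectangle, sum_val_fin_succ]
  subst hg
  ring_nf
  omega

theorem prod_rectangle_sub {k a c m : ℕ} (h : c + m = a) :
    ∏ i, ((rectangle k a i : ℚ) - c) = m.ascFactorial k := by
  rw [ascFactorial_eq_prod_range, ← Fin.prod_univ_eq_prod_range]
  push_cast [rectangle, ← h]
  exact prod_congr rfl fun i _ => by ring

theorem two_mul_ascFactorial_three (k : ℕ) :
    2 * (3).ascFactorial k = (k + 1) * (k + 2) * (1).ascFactorial k := by
  have h2 := succ_ascFactorial 2 k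
  have h1 := succ_ascFactorial 1 k
  simp only [one_mul] at h1
  rw [h2, h1]; ring

theorem two_mul_det_vandermonde_rectangleMinusVerticalDomino (k c : ℕ) :
    2 * (vandermonde fun i => (rectangleMinusVerticalDomino k c i : ℚ)).det =
      (k + 1) * (k + 2) * (vandermonde fun i => (rectangle (k + 2) (c + 1) i : ℚ)).det := by
  have h : (2 : ℚ) * (3).ascFactorial k = (k + 1) * (k + 2) * (1).ascFactorial k := by
    exact_mod_cast two_mul_ascFactorial_three k
  rw [rectangleMinusVerticalDomino, rectangle_succ, rectangle_succ, det_vandermonde_natCast_cons,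
    det_vandermonde_natCast_cons, det_vandermonde_natCast_cons, det_vandermonde_natCast_cons,
    Fin.prod_univ_succ, Fin.prod_univ_succ]
  simp only [Fin.cons_zero, Fin.cons_succ]
  rw [prod_rectangle_sub (c := c) (m := 3) rfl, prod_rectangle_sub (c := c + 1) (m := 2) rfl,
    prod_rectangle_sub (c := c + 1 + 1) (m := 1) rfl]
  push_cast
  linear_combination
    ((2).ascFactorial k : ℚ) * (vandermonde fun i => (rectangle k (c + 3) i : ℚ)).det * h

theorem two_mul_det_vandermonde_rectangleMinusHorizontalDomino (k c : ℕ) :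
    2 * (vandermonde fun i => (rectangleMinusHorizontalDomino k c i : ℚ)).det =
      (k + 1) * (k + 2) * (vandermonde fun i => (rectangle (k + 1) (c + 2) i : ℚ)).det := by
  rw [rectangleMinusHorizontalDomino, rectangle_succ, det_vandermonde_natCast_cons,
    det_vandermonde_natCast_cons, prod_rectangle_sub (c := c) (m := 3) rfl,
    prod_rectangle_sub (c := c + 2) (m := 1) rfl]
  have h : (2 : ℚ) * (3).ascFactorial k = (k + 1) * (k + 2) * (1).ascFactorial k := by
    exact_mod_cast two_mul_ascFactorial_three k
  linear_combination (vandermonde fun i => (rectangle k (c + 3) i : ℚ)).det * h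

theorem frobeniusQuotient_rectangleMinusVerticalDomino {k c g : ℕ} (hg : g = (k + 2) * (c + 1)) :
    frobeniusQuotient (g - 2) (rectangleMinusVerticalDomino k c) =
      ((k + 1) * (c + 2) : ℕ) * frobeniusQuotient g (rectangle (k + 2) (c + 1)) /
        (2 * ((g : ℚ) - 1)) := by
  obtain ⟨n, rfl⟩ : ∃ n, g = n + 2 := ⟨g - 2, by rw [hg]; ring_nf; omega⟩
  have hΔ := two_mul_det_vandermonde_rectangleMinusVerticalDomino k c
  have hv : ∏ i, ((rectangleMinusVerticalDomino k c i)! : ℚ) =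
      c ! * (c + 1)! * ∏ i, ((rectangle k (c + 3) i)! : ℚ) := by
    simp [rectangleMinusVerticalDomino, Fin.prod_univ_succ, mul_assoc]
  have hr : ∏ i, ((rectangle (k + 2) (c + 1) i)! : ℚ) =
      (c + 1)! * (c + 2)! * ∏ i, ((rectangle k (c + 3) i)! : ℚ) := by
    simp [rectangle_succ, Fin.prod_univ_succ, mul_assoc]
  have hgq : (n : ℚ) + 2 = (k + 2) * (c + 1) := by exact_mod_cast hg
  rw [frobeniusQuotient, frobeniusQuotient, hv, hr, Nat.add_sub_cancel,
    show ((n + 2 : ℕ) : ℚ) - 1 = n + 1 by push_cast; ring]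
  simp only [factorial_succ]
  push_cast
  field_simp
  linear_combination ((c : ℚ) + 1) * (c + 2) * hΔ - ((k : ℚ) + 1) * (c + 2) *
    (vandermonde fun i => (rectangle (k + 2) (c + 1) i : ℚ)).det * hgq

theorem frobeniusQuotient_rectangleMinusHorizontalDomino {k c g : ℕ}
    (hg : g = (k + 1) * (c + 2)) :
    frobeniusQuotient (g - 2) (rectangleMinusHorizontalDomino k c) =
      ((k + 2) * (c + 1) : ℕ) * frobeniusQuotient g (rectangle (k + 1) (c + 2)) /
        (2 * ((g : ℚ) - 1)) := by
  obtain ⟨n, rfl⟩ : ∃ n, g = n + 2 := ⟨g - 2, by rw [hg]; ring_nf; omega⟩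
  have hΔ := two_mul_det_vandermonde_rectangleMinusHorizontalDomino k c
  have hh : ∏ i, ((rectangleMinusHorizontalDomino k c i)! : ℚ) =
      c ! * ∏ i, ((rectangle k (c + 3) i)! : ℚ) := by
    simp [rectangleMinusHorizontalDomino, Fin.prod_univ_succ]
  have hr : ∏ i, ((rectangle (k + 1) (c + 2) i)! : ℚ) =
      (c + 2)! * ∏ i, ((rectangle k (c + 3) i)! : ℚ) := by
    simp [rectangle_succ, Fin.prod_univ_succ]
  have hgq : (n : ℚ) + 2 = (k + 1) * (c + 2) := by exact_mod_cast hg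
  rw [frobeniusQuotient, frobeniusQuotient, hh, hr, Nat.add_sub_cancel,
    show ((n + 2 : ℕ) : ℚ) - 1 = n + 1 by push_cast; ring]
  simp only [factorial_succ]
  push_cast
  field_simp
  linear_combination ((c : ℚ) + 2) * hΔ - ((k : ℚ) + 2) *
    (vandermonde fun i => (rectangle (k + 1) (c + 2) i : ℚ)).det * hgq

theorem castelnuovo_eq_frobeniusQuotient (r s g : ℕ) :
    (((∏ i ∈ range (r + 1), i !) * g ! : ℕ) : ℚ) / ((∏ i ∈ range (r + 1), (s + 1 + i)! : ℕ) : ℚ) =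
      frobeniusQuotient g (rectangle (r + 1) (s + 1)) := by
  have hΔ : (vandermonde fun i => (rectangle (r + 1) (s + 1) i : ℚ)).det =
      ∏ i ∈ range (r + 1), (i ! : ℚ) := by
    have h : (fun i : Fin (r + 1) => (rectangle (r + 1) (s + 1) i : ℚ)) =
        fun i : Fin (r + 1) => ((i : ℕ) : ℚ) + (s + 1 : ℚ) := by
      ext i; push_cast [rectangle]; ring
    rw [h, det_vandermonde_add, det_vandermonde_id_eq_superFactorial, ← prod_range_succ_factorial]
    push_cast; rfl
  rw [frobeniusQuotient, hΔ]
  simp only [rectangle]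
  rw [Fin.prod_univ_eq_prod_range (fun i => ((s + 1 + i)! : ℚ))]
  push_cast
  ring

/-- For integers r ≥ 1, s ≥ 1, with g = (r+1)(s+1), d = r(s+2) and
N = (∏_{i=0}^r i!)·g!/∏_{i=0}^r (s+1+i)! the Castelnuovo number, both
dN/(2(g−1)) and (2g−2−d)N/(2(g−1)) are positive integers. -/
theorem ramification_counts_integral (r s : ℕ) (hr : 1 ≤ r) (hs : 1 ≤ s)
    (g d : ℕ) (hg : g = (r + 1) * (s + 1)) (hd : d = r * (s + 2))
    (N : ℚ)
    (hN : N = (((∏ i ∈ Finset.range (r + 1), Nat.factorial i) *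
        Nat.factorial g : ℕ) : ℚ) /
      ((∏ i ∈ Finset.range (r + 1), Nat.factorial (s + 1 + i) : ℕ) : ℚ)) :
    (∃ a : ℕ, 0 < a ∧ (d : ℚ) * N / (2 * ((g : ℚ) - 1)) = (a : ℚ)) ∧
    (∃ b : ℕ, 0 < b ∧
      (2 * (g : ℚ) - 2 - (d : ℚ)) * N / (2 * ((g : ℚ) - 1)) = (b : ℚ)) := by
  obtain ⟨t, rfl⟩ : ∃ t, r = t + 1 := ⟨r - 1, by omega⟩
  obtain ⟨w, rfl⟩ : ∃ w, s = w + 1 := ⟨s - 1, by omega⟩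
  rw [hN, castelnuovo_eq_frobeniusQuotient]
  constructor
  · rw [hd, ← frobeniusQuotient_rectangleMinusVerticalDomino hg]
    exact exists_pos_nat_eq_frobeniusQuotient (strictMono_rectangleMinusVerticalDomino t (w + 1))
      (sum_rectangleMinusVerticalDomino hg)
  · have hcount : 2 * (g : ℚ) - 2 - d = ((t + 1 + 2) * (w + 1) : ℕ) := by
      rw [hg, hd]; push_cast; ring
    rw [hcount, ← frobeniusQuotient_rectangleMinusHorizontalDomino hg]
    exact exists_pos_nat_eq_frobeniusQuotient (strictMono_rectangleMinusHorizontalDomino (t + 1) w)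
      (sum_rectangleMinusHorizontalDomino hg)
end
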